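/- arXiv:2412.01962 — 2 statements merged into one kernel-verified Lean document; each statement's English description precedes it below -/
import Mathlib

section
/- Let x be an alcove and i, j ∈ {1,...,n} with i, j ≠ P(x)(1). Then i ⊴_x j if and only if c^{-1}(i) ⊴_{rot(x)} c^{-1}(j). Moreover, if P(x)(1) ⊴_x j then c^{-1}(P(x)(1)) ⊴_{rot(x)} c^{-1}(j). -/
open Finset

/-- Standard basis vector `e_j` in `ℤⁿ`. -/
def ev (n : ℕ) (j : Fin n) : Fin n → ℤ := fun k => if k = j then 1 else 0

/-- The coweight `ϖ_t = e_1 + ⋯ + e_t` (t ones followed by zeros). -/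
def varpi (n t : ℕ) : Fin n → ℤ := fun j => if (j : ℕ) < t then 1 else 0

/-- Dominance order `μ ⪯ λ`: equal total sums, partial sums of `μ` bounded by those of `λ`. -/
def DomLE {n : ℕ} (μ lam : Fin n → ℤ) : Prop :=
  (∑ i, μ i = ∑ i, lam i) ∧
  ∀ k : Fin n, ∑ i ∈ Finset.Iic k, μ i ≤ ∑ i ∈ Finset.Iic k, lam i

/-- A coweight is dominant iff its coordinates are weakly decreasing. -/
def IsDominant {n : ℕ} (v : Fin n → ℤ) : Prop := ∀ i j : Fin n, i ≤ j → v j ≤ v i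

/-- The weakly decreasing rearrangement `dom(v)` of `v`. -/
noncomputable def domOf {n : ℕ} (v : Fin n → ℤ) : Fin n → ℤ :=
  v ∘ Tuple.sort (fun i => -v i)

/-- `succA x i` is `x^{(i+1)}`, with the convention `x^{(n+1)} = x^{(1)} + (1,…,1)`. -/
def succA {n : ℕ} (x : Fin n → Fin n → ℤ) (i : Fin n) : Fin n → ℤ :=
  if h : (i : ℕ) + 1 < n then x ⟨(i : ℕ) + 1, h⟩ else fun j => x ⟨0, i.pos⟩ j + 1

/-- A tuple `(x^{(1)},…,x^{(n)})` is an alcove. -/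
def IsAlcove {n : ℕ} (x : Fin n → Fin n → ℤ) : Prop :=
  (∀ i : Fin n, ∀ j, x i j ≤ succA x i j) ∧
  (∀ i : Fin n, (i : ℕ) + 1 < n → ∑ j, succA x i j = (∑ j, x i j) + 1)

/-- `P` is the permutation `P(x)` of the alcove `x`: `x^{(i+1)} = x^{(i)} + e_{P(x)(i)}`. -/
def IsPermOf {n : ℕ} (x : Fin n → Fin n → ℤ) (P : Equiv.Perm (Fin n)) : Prop :=
  ∀ i : Fin n, ∀ j, succA x i j = x i j + ev n (P i) j

/-- A permutation acts on `ℤⁿ` by permuting coordinates: `(σv)_{σ(i)} = v_i`. -/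
def permAct {n : ℕ} (σ : Equiv.Perm (Fin n)) (v : Fin n → ℤ) : Fin n → ℤ :=
  fun j => v (σ.symm j)

/-- The `n`-cycle `c = (1 2 ⋯ n)`. -/
def cyc (n : ℕ) [NeZero n] : Equiv.Perm (Fin n) := Equiv.addRight 1

/-- Rotation of alcoves. -/
def rotA {n : ℕ} [NeZero n] (x : Fin n → Fin n → ℤ) : Fin n → Fin n → ℤ := fun i =>
  if h : (i : ℕ) + 1 < n then
    permAct (cyc n)⁻¹ (fun j => x ⟨(i : ℕ) + 1, h⟩ j - varpi n 1 j)
  else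
    fun j => permAct (cyc n)⁻¹ (x 0) j + varpi n (n - 1) j

/-- An alcove is `λ`-permissible if `dom(x^{(i)} - ϖ_{i-1}) ⪯ λ` for all `i`. -/
noncomputable def Permissible {n : ℕ} (lam : Fin n → ℤ) (x : Fin n → Fin n → ℤ) : Prop :=
  ∀ i : Fin n, DomLE (domOf (fun j => x i j - varpi n (i : ℕ) j)) lam

/-- The Kottwitz–Rapoport relation `i ⊴_x j` (six-case rule). -/
def TriLE {n : ℕ} (x : Fin n → Fin n → ℤ) (P : Equiv.Perm (Fin n)) (i j : Fin n) : Prop :=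
  (x ⟨0, i.pos⟩ j < x ⟨0, i.pos⟩ i) ∨
  (x ⟨0, i.pos⟩ i = x ⟨0, i.pos⟩ j ∧
    ((P.symm i < i ∧ P.symm j < j ∧ j ≤ i) ∨
     (P.symm i < i ∧ j ≤ P.symm j) ∨
     (P.symm i = i ∧ P.symm j = j ∧ i = j) ∨
     (P.symm i = i ∧ j < P.symm j) ∨
     (i < P.symm i ∧ j < P.symm j ∧ j ≤ i)))

/-! Rotation conjugates the permutation, `P(rot x) = c⁻¹ P(x) c`, and
`rot(x)^{(1)} = c⁻¹ (x^{(1)} + e_{P(x)(1)} - e_1)`. Hence the data `(x^{(1)}_i, i, P(x)⁻¹ i)`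
that the six-case rule reads off for an index `i` become, for `c⁻¹ i`, the data
`(x^{(1)}_i + [P(x)⁻¹ i = 1] - [i = 1], i - 1, P(x)⁻¹ i - 1)` with indices taken cyclically
(in the code they start at `0`). For `i = 1` the drop of the value by one compensates the
wrap-around of `i - 1` to `n`, and the claim is a finite case check on the shifted data. -/

lemma ev_injective (n : ℕ) : Function.Injective (ev n) := by
  intro a b h
  simpa [ev] using congrFun h a

section Rotation

variable {n : ℕ}

lemma IsPermOf.unique {x : Fin n → Fin n → ℤ} {P Q : Equiv.Perm (Fin n)} (hP : IsPermOf x P)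
    (hQ : IsPermOf x Q) : P = Q :=
  Equiv.ext fun i => ev_injective n <| funext fun j =>
    add_left_cancel ((hP i j).symm.trans (hQ i j))

lemma succA_eq_ite {m : ℕ} (x : Fin (m + 1) → Fin (m + 1) → ℤ) (i : Fin (m + 1)) :
    succA x i = if i = Fin.last m then fun j => x 0 j + 1 else x (i + 1) := by
  unfold succA
  split_ifs with h h' h'
  · exact absurd h (by simp [h'])
  · congr 1
    ext
    rw [Fin.val_add_one_of_lt (Fin.lt_last_iff_ne_last.mpr h')]
  · rfl
  · exact absurd (Fin.ext (by simp; omega)) h'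

variable [NeZero n]

lemma cyc_symm_apply (k : Fin n) : (cyc n).symm k = k - 1 := by
  simp [cyc, sub_eq_add_neg]

lemma ev_add_one (a j : Fin n) : ev n a (j + 1) = ev n (a - 1) j := by
  simp only [ev, ← eq_sub_iff_add_eq]

lemma rotA_apply (x : Fin n → Fin n → ℤ) (i j : Fin n) :
    rotA x i j = succA x i (j + 1) - varpi n 1 (j + 1) := by
  obtain ⟨m, rfl⟩ := Nat.exists_eq_add_one_of_ne_zero (NeZero.ne n)
  unfold rotA succA
  split_ifs with h
  · rfl
  · have hvarpi : varpi (m + 1) m j + varpi (m + 1) 1 (j + 1) = 1 := by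
      have := j.isLt
      simp only [varpi, Fin.val_add_one, Fin.ext_iff, Fin.val_last]
      split_ifs <;> omega
    change x 0 (j + 1) + varpi (m + 1) m j = x 0 (j + 1) + 1 - _
    omega

lemma succA_rotA_sub_rotA (x : Fin n → Fin n → ℤ) (i j : Fin n) :
    succA (rotA x) i j - rotA x i j = succA x (i + 1) (j + 1) - x (i + 1) (j + 1) := by
  obtain ⟨m, rfl⟩ := Nat.exists_eq_add_one_of_ne_zero (NeZero.ne n)
  rw [succA_eq_ite (rotA x)]
  split_ifs with h
  · subst h
    simp only [rotA_apply, succA_eq_ite x (Fin.last m), if_pos, Fin.last_add_one]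
    ring
  · simp only [rotA_apply, succA_eq_ite x i, h, if_false]
    ring

variable {x : Fin n → Fin n → ℤ} {P : Equiv.Perm (Fin n)}

lemma isPermOf_rotA (hP : IsPermOf x P) : IsPermOf (rotA x) ((cyc n)⁻¹ * P * cyc n) := by
  intro i j
  have h := succA_rotA_sub_rotA x i j
  rw [hP, ev_add_one] at h
  simp only [Equiv.Perm.coe_mul, Function.comp_apply, Equiv.Perm.inv_def, cyc_symm_apply]
  change _ = _ + ev n (P (i + 1) - 1) j
  linarith

lemma perm_symm_rotA_sub_one (hP : IsPermOf x P) {P' : Equiv.Perm (Fin n)}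
    (hP' : IsPermOf (rotA x) P') (k : Fin n) : P'.symm (k - 1) = P.symm k - 1 := by
  rw [hP'.unique (isPermOf_rotA hP), Equiv.symm_apply_eq]
  simp [Equiv.Perm.inv_def, cyc, sub_eq_add_neg]

lemma rotA_zero_sub_one (hP : IsPermOf x P) (k : Fin n) :
    rotA x 0 (k - 1) = x 0 k + (if P.symm k = 0 then 1 else 0) - if k = 0 then 1 else 0 := by
  rw [rotA_apply, sub_add_cancel, hP]
  simp only [ev, varpi, Nat.lt_one_iff, Fin.val_eq_zero_iff, Equiv.symm_apply_eq]

end Rotation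

def TriRule {n : ℕ} (u v : ℤ) (a p b q : Fin n) : Prop :=
  v < u ∨
  (u = v ∧
    ((p < a ∧ q < b ∧ b ≤ a) ∨
     (p < a ∧ b ≤ q) ∨
     (p = a ∧ q = b ∧ a = b) ∨
     (p = a ∧ b < q) ∨
     (a < p ∧ b < q ∧ b ≤ a)))

lemma triLE_iff_triRule {n : ℕ} [NeZero n] (x : Fin n → Fin n → ℤ) (P : Equiv.Perm (Fin n))
    (i j : Fin n) : TriLE x P i j ↔ TriRule (x 0 i) (x 0 j) i (P.symm i) j (P.symm j) :=
  Iff.rfl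

section TriRule

variable {n : ℕ} [NeZero n] {u v : ℤ} {a p b q : Fin n}

lemma triRule_sub_one_iff (hp : p ≠ 0) (hq : q ≠ 0) :
    TriRule (u - if a = 0 then 1 else 0) (v - if b = 0 then 1 else 0) (a - 1) (p - 1) (b - 1)
      (q - 1) ↔ TriRule u v a p b q := by
  obtain ⟨m, rfl⟩ := Nat.exists_eq_add_one_of_ne_zero (NeZero.ne n)
  have := a.isLt; have := b.isLt; have := p.isLt; have := q.isLt
  simp only [TriRule, ne_eq, Fin.lt_def, Fin.le_def, Fin.ext_iff, Fin.coe_sub_one,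
    Fin.val_zero] at *
  split_ifs <;> omega

lemma triRule_sub_one_of_zero (h : TriRule u v a 0 b q) :
    TriRule (u + 1 - if a = 0 then 1 else 0)
      (v + (if q = 0 then 1 else 0) - if b = 0 then 1 else 0) (a - 1) (0 - 1) (b - 1) (q - 1) := by
  obtain ⟨m, rfl⟩ := Nat.exists_eq_add_one_of_ne_zero (NeZero.ne n)
  have := a.isLt; have := b.isLt; have := q.isLt
  simp only [TriRule, Fin.lt_def, Fin.le_def, Fin.ext_iff, Fin.coe_sub_one, Fin.val_zero] at *
  split_ifs <;> omega

end TriRule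

theorem triLE_rot_compare_general (n : ℕ) [NeZero n] (x : Fin n → Fin n → ℤ)
    (P P' : Equiv.Perm (Fin n)) (hP : IsPermOf x P) (hP' : IsPermOf (rotA x) P') :
    (∀ i j : Fin n, i ≠ P 0 → j ≠ P 0 →
      (TriLE x P i j ↔ TriLE (rotA x) P' ((cyc n).symm i) ((cyc n).symm j))) ∧
    (∀ j : Fin n, TriLE x P (P 0) j →
      TriLE (rotA x) P' ((cyc n).symm (P 0)) ((cyc n).symm j)) := by
  refine ⟨fun i j hi hj => ?_, fun j h => ?_⟩
  · have hi' : P.symm i ≠ 0 := fun h => hi (P.symm_apply_eq.mp h)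
    have hj' : P.symm j ≠ 0 := fun h => hj (P.symm_apply_eq.mp h)
    simp only [triLE_iff_triRule, cyc_symm_apply, rotA_zero_sub_one hP,
      perm_symm_rotA_sub_one hP hP', if_neg hi', if_neg hj', add_zero]
    exact (triRule_sub_one_iff hi' hj').symm
  · rw [triLE_iff_triRule, Equiv.symm_apply_apply] at h
    simp only [triLE_iff_triRule, cyc_symm_apply, rotA_zero_sub_one hP,
      perm_symm_rotA_sub_one hP hP', Equiv.symm_apply_apply, if_pos]
    exact triRule_sub_one_of_zero h

theorem triLE_rot_compare (n : ℕ) [NeZero n] (x : Fin n → Fin n → ℤ) (hx : IsAlcove x)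
    (P P' : Equiv.Perm (Fin n)) (hP : IsPermOf x P) (hP' : IsPermOf (rotA x) P') :
    (∀ i j : Fin n, i ≠ P 0 → j ≠ P 0 →
      (TriLE x P i j ↔ TriLE (rotA x) P' ((cyc n).symm i) ((cyc n).symm j))) ∧
    (∀ j : Fin n, TriLE x P (P 0) j →
      TriLE (rotA x) P' ((cyc n).symm (P 0)) ((cyc n).symm j)) :=
  triLE_rot_compare_general n x P P' hP hP'
end

section
/- Let x be an alcove, choose a total order ◀_x refining ⊴_x, and extend to a compatible sequence of total orders ◀_{rot^{k-1}(x)} refining ⊴_{rot^{k-1}(x)} for 1 ≤ k ≤ n. For each k, let δ^{(k)} ∈ S_n be the permutation with δ^{(k)}(i) ≤ δ^{(k)}(j) iff c^{1-k}(i) ◀_{rot^{k-1}(x)} c^{1-k}(j). Then δ^{(k)}(x^{(k)} - ϖ_{k-1}) is a dominant coweight (weakly decreasing). -/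
open Finset

section Aux

variable {n : ℕ} [NeZero n]

lemma cyc_apply_val (j : Fin n) : ((cyc n) j : ℕ) = ((j : ℕ) + 1) % n := by
  have h1 : (cyc n) j = j + 1 := rfl
  rw [h1, Fin.add_def, Fin.val_one']
  rw [Nat.add_mod (j : ℕ) 1 n, Nat.mod_eq_of_lt j.isLt]

lemma cyc_pow_apply (m : ℕ) (j : Fin n) :
    (((cyc n) ^ m) j : ℕ) = ((j : ℕ) + m) % n := by
  induction m generalizing j with
  | zero => simp [Nat.mod_eq_of_lt j.isLt]
  | succ m ih =>
    rw [pow_succ, Equiv.Perm.mul_apply, ih, cyc_apply_val, Nat.mod_add_mod]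
    ring_nf

lemma mod_lt_iff {A k : ℕ} (hA : A < n) (hk : k < n) :
    ((A + k) % n < k ↔ n - k ≤ A) := by
  rcases lt_or_ge (A + k) n with h | h
  · rw [Nat.mod_eq_of_lt h]; omega
  · have h2 : A + k - n < n := by omega
    rw [Nat.mod_eq_sub_mod h, Nat.mod_eq_of_lt h2]; omega

/-- The iterate formula for rotation. -/
lemma rot_iter (m : ℕ) (x : Fin n → Fin n → ℤ) (i : Fin n) (h : (i : ℕ) + m < n)
    (j : Fin n) :
    rotA^[m] x i j = x ⟨(i : ℕ) + m, h⟩ (((cyc n) ^ m) j) -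
      (if n - m ≤ (j : ℕ) then 1 else 0) := by
  induction m generalizing i j with
  | zero =>
    have he : (⟨(i : ℕ) + 0, h⟩ : Fin n) = i := by ext; simp
    simp [he, Nat.not_le.mpr j.isLt]
  | succ m ih =>
    rw [Function.iterate_succ_apply']
    have hi1 : (i : ℕ) + 1 < n := by omega
    have hrot : rotA (rotA^[m] x) i j =
        (rotA^[m] x) ⟨(i : ℕ) + 1, hi1⟩ ((cyc n) j) - varpi n 1 ((cyc n) j) := by
      rw [rotA, dif_pos hi1]
      have hsymm : ((cyc n)⁻¹ : Equiv.Perm (Fin n)).symm = cyc n := rfl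
      simp [permAct, hsymm]
    rw [hrot]
    have h2 : ((⟨(i : ℕ) + 1, hi1⟩ : Fin n) : ℕ) + m < n := by simp; omega
    rw [ih ⟨(i : ℕ) + 1, hi1⟩ h2]
    have hx : x ⟨((⟨(i : ℕ) + 1, hi1⟩ : Fin n) : ℕ) + m, h2⟩ (((cyc n) ^ m) ((cyc n) j))
        = x ⟨(i : ℕ) + (m + 1), h⟩ (((cyc n) ^ (m + 1)) j) := by
      have hidx : (⟨((⟨(i : ℕ) + 1, hi1⟩ : Fin n) : ℕ) + m, h2⟩ : Fin n)
          = ⟨(i : ℕ) + (m + 1), h⟩ := by ext; simp; try omega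
      rw [hidx, pow_succ, Equiv.Perm.mul_apply]
    rw [hx]
    have hval : (if n - m ≤ (((cyc n) j) : ℕ) then (1:ℤ) else 0) + varpi n 1 ((cyc n) j)
        = if n - (m + 1) ≤ (j : ℕ) then 1 else 0 := by
      have hc := cyc_apply_val j
      have hjlt := j.isLt
      rw [varpi]
      rcases Nat.lt_or_ge ((j : ℕ) + 1) n with hlt | hge
      · rw [hc, Nat.mod_eq_of_lt hlt]
        split_ifs <;> omega
      · have hj0 : (((cyc n) j) : ℕ) = 0 := by
          rw [hc]
          have he : (j : ℕ) + 1 = n := by omega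
          rw [he]; exact Nat.mod_self n
        rw [hj0]
        split_ifs <;> omega
    rw [← hval]; ring

end Aux

theorem delta_dominant (n : ℕ) [NeZero n] (x : Fin n → Fin n → ℤ) (hx : IsAlcove x)
    (P : ℕ → Equiv.Perm (Fin n)) (hP : ∀ k < n, IsPermOf (rotA^[k] x) (P k))
    (R : ℕ → Fin n → Fin n → Prop)
    (hRrefl : ∀ k < n, ∀ i, R k i i)
    (hRtotal : ∀ k < n, ∀ i j, R k i j ∨ R k j i)
    (hRantisymm : ∀ k < n, ∀ i j, R k i j → R k j i → i = j)
    (hRtrans : ∀ k < n, ∀ i j l, R k i j → R k j l → R k i l)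
    (hRrefine : ∀ k < n, ∀ i j, TriLE (rotA^[k] x) (P k) i j → R k i j)
    (hcompat : ∀ k, k + 1 < n → ∀ m : ℤ, ∀ i j : Fin n,
      rotA^[k] x 0 i = m → P k i = i → rotA^[k] x 0 j = m → P k j = j →
      (R k i j ↔ R (k + 1) ((cyc n).symm i) ((cyc n).symm j)))
    (δ : ℕ → Equiv.Perm (Fin n))
    (hδ : ∀ k < n, ∀ i j : Fin n,
      δ k i ≤ δ k j ↔ R k ((((cyc n)⁻¹) ^ k) i) ((((cyc n)⁻¹) ^ k) j)) :
    ∀ k, ∀ hk : k < n,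
      IsDominant (permAct (δ k) (fun j => x ⟨k, hk⟩ j - varpi n k j)) := by
  intro k hk
  intro i j hij
  simp only [permAct]
  -- abbreviations
  have hy : ∀ t : Fin n, rotA^[k] x 0 t
      = x ⟨k, hk⟩ (((cyc n) ^ k) t) - varpi n k (((cyc n) ^ k) t) := by
    intro t
    have h0 : ((0 : Fin n) : ℕ) + k < n := by simpa using hk
    rw [rot_iter k x 0 h0 t]
    congr 1
    · congr 1
      ext; simp
    · simp only [varpi, cyc_pow_apply, mod_lt_iff t.isLt hk]
  have hA : ∀ t : Fin n, ((cyc n) ^ k) ((((cyc n)⁻¹) ^ k) t) = t := by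
    intro t
    rw [inv_pow]
    exact Equiv.apply_symm_apply _ t
  have hab : δ k ((δ k).symm i) ≤ δ k ((δ k).symm j) := by
    rw [Equiv.apply_symm_apply, Equiv.apply_symm_apply]; exact hij
  have hR : R k ((((cyc n)⁻¹) ^ k) ((δ k).symm i)) ((((cyc n)⁻¹) ^ k) ((δ k).symm j)) :=
    (hδ k hk _ _).mp hab
  have ea : x ⟨k, hk⟩ ((δ k).symm i) - varpi n k ((δ k).symm i)
      = rotA^[k] x 0 ((((cyc n)⁻¹) ^ k) ((δ k).symm i)) := by
    rw [hy, hA]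
  have eb : x ⟨k, hk⟩ ((δ k).symm j) - varpi n k ((δ k).symm j)
      = rotA^[k] x 0 ((((cyc n)⁻¹) ^ k) ((δ k).symm j)) := by
    rw [hy, hA]
  rw [ea, eb]
  by_contra hcon
  push_neg at hcon
  have htri : TriLE (rotA^[k] x) (P k)
      ((((cyc n)⁻¹) ^ k) ((δ k).symm j)) ((((cyc n)⁻¹) ^ k) ((δ k).symm i)) :=
    Or.inl hcon
  have h1 := hRrefine k hk _ _ htri
  have h2 := hRantisymm k hk _ _ hR h1
  rw [h2] at hcon
  exact lt_irrefl _ hcon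
end
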